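/- Let n ≥ 1 and let F : ℝ^{4n} → ℝ be smooth and everywhere positive. Set u = F² and f = −2 ln F (so u = e^{−f}). Then for every x ∈ ℝ^{4n}: u(x)·P_f(x)(∇f(x)) = 4·P_F(x)(∇F(x)) + [ −(1/4)|∇f(x)|⁴ + (1/2)|∇f(x)|²·Δf(x) + D²f(x)[∇f(x), ∇f(x)] ]·u(x). -/

import Mathlib

open scoped RealInnerProductSpace

noncomputable section

/-- `ℝ^{4n}` identified with `ℍⁿ`: the `4n` real coordinates are indexed by pairs
`(a, t)` where `a` numbers the quaternionic component and `t ∈ {0,1,2,3}` the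
real coordinates `1, i, j, k` of that quaternion. -/
abbrev Qn (n : ℕ) := EuclideanSpace ℝ (Fin n × Fin 4)

/-- The three almost complex structures `I₁, I₂, I₃` on `ℝ^{4n} = ℍⁿ`, given by
componentwise left multiplication by the quaternion units `i, j, k`. -/
def Iop (n : ℕ) (s : Fin 3) (x : Qn n) : Qn n := WithLp.toLp 2 fun (p : Fin n × Fin 4) =>
  ![ ![ -x (p.1, 1),  x (p.1, 0), -x (p.1, 3),  x (p.1, 2) ],
     ![ -x (p.1, 2),  x (p.1, 3),  x (p.1, 0), -x (p.1, 1) ],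
     ![ -x (p.1, 3), -x (p.1, 2),  x (p.1, 1),  x (p.1, 0) ] ] s p.2

/-- The standard orthonormal basis of `ℝ^{4n}`. -/
def eQ (n : ℕ) (p : Fin n × Fin 4) : Qn n := EuclideanSpace.single p 1

/-- Second Fréchet derivative as a bilinear form. -/
def D2Q (n : ℕ) (g : Qn n → ℝ) (x X Y : Qn n) : ℝ := iteratedFDeriv ℝ 2 g x ![X, Y]

/-- Third Fréchet derivative as a trilinear form. -/
def D3Q (n : ℕ) (g : Qn n → ℝ) (x Z X Y : Qn n) : ℝ := iteratedFDeriv ℝ 3 g x ![Z, X, Y]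

/-- The Laplacian `Δg(x) = Σ_a D²g(x)[e_a, e_a]`. -/
def lapQ (n : ℕ) (g : Qn n → ℝ) (x : Qn n) : ℝ := ∑ p, D2Q n g x (eQ n p) (eQ n p)

/-- The flat quaternionic P-form
`P_g(x)(Z) = Σ_b D³g(x)[Z,e_b,e_b] + Σ_{s=1}^3 Σ_b D³g(x)[I_s Z, e_b, I_s e_b]`. -/
def PQ (n : ℕ) (g : Qn n → ℝ) (x Z : Qn n) : ℝ :=
  (∑ b, D3Q n g x Z (eQ n b) (eQ n b)) +
    ∑ s : Fin 3, ∑ b, D3Q n g x (Iop n s Z) (eQ n b) (Iop n s (eQ n b))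


/-! Put `L = log F`, so that `f = -2 L` and `∇f = -2 F⁻¹ ∇F`; differentiating `DF = F • DL`
twice expresses `D²L` and `D³L` through `DF`, `D²F` and `D³F`. In the twisted sums of `P_L(∇F)`
every term other than `F⁻¹ D³F` either contains `DF(I_s ∇F) = ⟪∇F, I_s ∇F⟫ = 0` or cancels
against its partner, because each `I_s` is skew-adjoint. In the straight sum the remaining terms
contract along the orthonormal basis to `|∇F|² ΔF`, `D²F(∇F, ∇F)` and `|∇F|⁴`, which is what the
bracket on the right-hand side collects. -/

open Real

section LogDerivatives

variable {E G : Type*} [NormedAddCommGroup E] [NormedSpace ℝ E] [NormedAddCommGroup G]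
  [NormedSpace ℝ G]

theorem iteratedFDeriv_three_apply (g : E → G) (x : E) (m : Fin 3 → E) :
    iteratedFDeriv ℝ 3 g x m = fderiv ℝ (fderiv ℝ (fderiv ℝ g)) x (m 0) (m 1) (m 2) := by
  rw [iteratedFDeriv_succ_apply_right, iteratedFDeriv_two_apply]
  rfl

theorem fderiv_clm_apply_const {h : E → E →L[ℝ] G} {x : E} (hh : DifferentiableAt ℝ h x)
    (v w : E) : fderiv ℝ (fun y => h y v) x w = fderiv ℝ h x w v := by
  simp [fderiv_clm_apply hh (differentiableAt_const v)]

theorem fderiv_fderiv_clm_apply_const {h : E → E →L[ℝ] E →L[ℝ] G} {x : E}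
    (hh : DifferentiableAt ℝ h x) (u v w : E) :
    fderiv ℝ (fun y => h y v w) x u = fderiv ℝ h x u v w := by
  rw [fderiv_clm_apply_const (hh.clm_apply (differentiableAt_const v)),
    fderiv_clm_apply_const hh]

variable {F : E → ℝ}

theorem fderiv_eq_smul_fderiv_log (hF : Differentiable ℝ F) (hF0 : ∀ y, F y ≠ 0) (y : E) :
    fderiv ℝ F y = F y • fderiv ℝ (fun z => log (F z)) y := by
  rw [fderiv.log (hF y) (hF0 y), smul_smul, mul_inv_cancel₀ (hF0 y), one_smul]

theorem fderiv_fderiv_apply_eq_log (hF : ContDiff ℝ 2 F) (hF0 : ∀ y, F y ≠ 0) (y X Y : E) :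
    fderiv ℝ (fderiv ℝ F) y X Y =
      fderiv ℝ F y X * fderiv ℝ (fun z => log (F z)) y Y
        + F y * fderiv ℝ (fderiv ℝ (fun z => log (F z))) y X Y := by
  have hF1 : Differentiable ℝ F := hF.differentiable (by norm_num)
  have hDF : Differentiable ℝ (fderiv ℝ F) :=
    (hF.fderiv_right (m := 1) (by norm_num)).differentiable (by norm_num)
  have hDL : Differentiable ℝ (fderiv ℝ (fun z => log (F z))) :=
    ((hF.log hF0).fderiv_right (m := 1) (by norm_num)).differentiable (by norm_num)
  have hDFY : (fun z => fderiv ℝ F z Y) = fun z => F z * fderiv ℝ (fun z => log (F z)) z Y :=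
    funext fun z => by simp [fderiv_eq_smul_fderiv_log hF1 hF0 z]
  rw [← fderiv_clm_apply_const (hDF y), ← fderiv_clm_apply_const (hDL y), hDFY,
    fderiv_fun_mul (hF1 y) ((hDL y).clm_apply (differentiableAt_const Y))]
  simp only [add_apply, FunLike.coe_smul, Pi.smul_apply, smul_eq_mul]
  ring

theorem fderiv_fderiv_fderiv_apply_eq_log (hF : ContDiff ℝ 3 F) (hF0 : ∀ y, F y ≠ 0)
    (x Z X Y : E) :
    fderiv ℝ (fderiv ℝ (fderiv ℝ F)) x Z X Y =
      fderiv ℝ (fderiv ℝ F) x Z X * fderiv ℝ (fun z => log (F z)) x Y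
        + fderiv ℝ F x X * fderiv ℝ (fderiv ℝ (fun z => log (F z))) x Z Y
        + fderiv ℝ F x Z * fderiv ℝ (fderiv ℝ (fun z => log (F z))) x X Y
        + F x * fderiv ℝ (fderiv ℝ (fderiv ℝ (fun z => log (F z)))) x Z X Y := by
  have hL : ContDiff ℝ 3 (fun z => log (F z)) := hF.log hF0
  have hF1 : Differentiable ℝ F := hF.differentiable (by norm_num)
  have hDF : Differentiable ℝ (fderiv ℝ F) :=
    (hF.fderiv_right (m := 2) (by norm_num)).differentiable (by norm_num)
  have hDDF : Differentiable ℝ (fderiv ℝ (fderiv ℝ F)) :=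
    ((hF.fderiv_right (m := 2) (by norm_num)).fderiv_right (m := 1) (by norm_num)).differentiable
      (by norm_num)
  have hDL : Differentiable ℝ (fderiv ℝ (fun z => log (F z))) :=
    (hL.fderiv_right (m := 2) (by norm_num)).differentiable (by norm_num)
  have hDDL : Differentiable ℝ (fderiv ℝ (fderiv ℝ (fun z => log (F z)))) :=
    ((hL.fderiv_right (m := 2) (by norm_num)).fderiv_right (m := 1) (by norm_num)).differentiable
      (by norm_num)
  rw [← fderiv_fderiv_clm_apply_const (hDDF x), ← fderiv_fderiv_clm_apply_const (hDDL x),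
    funext (fderiv_fderiv_apply_eq_log (hF.of_le (by norm_num)) hF0 · X Y),
    fderiv_fun_add (by fun_prop) (by fun_prop), fderiv_fun_mul (by fun_prop) (by fun_prop),
    fderiv_fun_mul (by fun_prop) (by fun_prop)]
  simp only [add_apply, FunLike.coe_smul, Pi.smul_apply, smul_eq_mul,
    fderiv_clm_apply_const (hDF x), fderiv_clm_apply_const (hDL x),
    fderiv_fderiv_clm_apply_const (hDDL x)]
  ring

theorem fderiv_fderiv_log_apply (hF : ContDiff ℝ 2 F) (hF0 : ∀ y, F y ≠ 0) (x X Y : E) :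
    fderiv ℝ (fderiv ℝ (fun y => log (F y))) x X Y =
      (F x)⁻¹ * fderiv ℝ (fderiv ℝ F) x X Y
        - (F x ^ 2)⁻¹ * (fderiv ℝ F x X * fderiv ℝ F x Y) := by
  have h := fderiv_fderiv_apply_eq_log hF hF0 x X Y
  rw [fderiv.log (hF.differentiable (by norm_num) x) (hF0 x)] at h
  have := hF0 x
  simp only [FunLike.coe_smul, Pi.smul_apply, smul_eq_mul] at h
  field_simp at h ⊢
  linear_combination -h

theorem fderiv_fderiv_fderiv_log_apply (hF : ContDiff ℝ 3 F) (hF0 : ∀ y, F y ≠ 0)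
    (x Z X Y : E) :
    fderiv ℝ (fderiv ℝ (fderiv ℝ (fun y => log (F y)))) x Z X Y =
      (F x)⁻¹ * fderiv ℝ (fderiv ℝ (fderiv ℝ F)) x Z X Y
        - (F x ^ 2)⁻¹ * (fderiv ℝ F x Z * fderiv ℝ (fderiv ℝ F) x X Y
          + fderiv ℝ F x X * fderiv ℝ (fderiv ℝ F) x Z Y
          + fderiv ℝ F x Y * fderiv ℝ (fderiv ℝ F) x Z X)
        + 2 * (F x ^ 3)⁻¹ * (fderiv ℝ F x Z * fderiv ℝ F x X * fderiv ℝ F x Y) := by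
  have h := fderiv_fderiv_fderiv_apply_eq_log hF hF0 x Z X Y
  rw [fderiv_fderiv_log_apply (hF.of_le (by norm_num)) hF0,
    fderiv_fderiv_log_apply (hF.of_le (by norm_num)) hF0,
    fderiv.log (hF.differentiable (by norm_num) x) (hF0 x)] at h
  have := hF0 x
  simp only [FunLike.coe_smul, Pi.smul_apply, smul_eq_mul] at h
  field_simp at h ⊢
  linear_combination -h

end LogDerivatives

section Gradient

variable {E : Type*} [NormedAddCommGroup E] [InnerProductSpace ℝ E] [CompleteSpace E]
  {F : E → ℝ}

theorem gradient_fun_const_mul {g : E → ℝ} {x : E} (hg : DifferentiableAt ℝ g x) (c : ℝ) :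
    gradient (fun y => c * g y) x = c • gradient g x := by
  rw [gradient, gradient, fderiv_const_mul hg]
  simp

theorem gradient_log_comp {x : E} (hF : DifferentiableAt ℝ F x) (hx : F x ≠ 0) :
    gradient (fun y => log (F y)) x = (F x)⁻¹ • gradient F x := by
  rw [gradient, gradient, fderiv.log hF hx]
  simp

end Gradient

theorem OrthonormalBasis.sum_apply_mul_inner {ι E : Type*} [Fintype ι] [NormedAddCommGroup E]
    [InnerProductSpace ℝ E] (b : OrthonormalBasis ι ℝ E) (L : E →L[ℝ] ℝ) (w : E) :
    ∑ i, ⟪w, b i⟫ * L (b i) = L w := by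
  conv_rhs => rw [← b.sum_repr' w]
  simp [map_sum, real_inner_comm]

theorem OrthonormalBasis.sum_inner_mul_inner_self {ι E : Type*} [Fintype ι]
    [NormedAddCommGroup E] [InnerProductSpace ℝ E] (b : OrthonormalBasis ι ℝ E) (w : E) :
    ∑ i, ⟪w, b i⟫ * ⟪w, b i⟫ = ‖w‖ ^ 2 := by
  simpa [real_inner_comm, real_inner_self_eq_norm_sq] using b.sum_inner_mul_inner w w

section Quaternionic

variable {n : ℕ}

def IopCLM (n : ℕ) (s : Fin 3) : Qn n →L[ℝ] Qn n :=
  LinearMap.toContinuousLinearMap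
    { toFun := Iop n s
      map_add' := fun x y => by
        ext ⟨a, t⟩
        fin_cases s <;> fin_cases t <;> simp [Iop] <;> ring
      map_smul' := fun c x => by
        ext ⟨a, t⟩
        fin_cases s <;> fin_cases t <;> simp [Iop] }

@[simp]
theorem IopCLM_apply (s : Fin 3) (v : Qn n) : IopCLM n s v = Iop n s v := rfl

theorem inner_Iop_right (s : Fin 3) (v w : Qn n) : ⟪v, Iop n s w⟫ = -⟪Iop n s v, w⟫ := by
  simp only [PiLp.inner_apply, RCLike.inner_apply, conj_trivial, ← Finset.sum_neg_distrib,
    Fintype.sum_prod_type]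
  refine Finset.sum_congr rfl fun a _ => ?_
  fin_cases s <;> simp [Iop, Fin.sum_univ_four] <;> ring

theorem inner_Iop_self (s : Fin 3) (v : Qn n) : ⟪v, Iop n s v⟫ = 0 := by
  have h := inner_Iop_right s v v
  rw [real_inner_comm v (Iop n s v)] at h
  linarith

theorem sum_inner_eQ_mul_apply (L : Qn n →L[ℝ] ℝ) (w : Qn n) :
    ∑ b, ⟪w, eQ n b⟫ * L (eQ n b) = L w := by
  simpa [eQ] using (EuclideanSpace.basisFun (Fin n × Fin 4) ℝ).sum_apply_mul_inner L w

theorem sum_inner_eQ_mul_inner_eQ (w : Qn n) :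
    ∑ b, ⟪w, eQ n b⟫ * ⟪w, eQ n b⟫ = ‖w‖ ^ 2 := by
  simpa [eQ] using (EuclideanSpace.basisFun (Fin n × Fin 4) ℝ).sum_inner_mul_inner_self w

theorem D2Q_eq_fderiv (g : Qn n → ℝ) (x X Y : Qn n) :
    D2Q n g x X Y = fderiv ℝ (fderiv ℝ g) x X Y := by
  simp [D2Q, iteratedFDeriv_two_apply]

theorem D3Q_eq_fderiv (g : Qn n → ℝ) (x Z X Y : Qn n) :
    D3Q n g x Z X Y = fderiv ℝ (fderiv ℝ (fderiv ℝ g)) x Z X Y := by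
  simp [D3Q, iteratedFDeriv_three_apply]

theorem D2Q_const_mul {g : Qn n → ℝ} (hg : ContDiff ℝ 2 g) (c : ℝ) (x X Y : Qn n) :
    D2Q n (fun y => c * g y) x X Y = c * D2Q n g x X Y := by
  simp only [D2Q, ← smul_eq_mul, iteratedFDeriv_const_smul_apply' hg.contDiffAt]
  rfl

theorem D3Q_const_mul {g : Qn n → ℝ} (hg : ContDiff ℝ 3 g) (c : ℝ) (x Z X Y : Qn n) :
    D3Q n (fun y => c * g y) x Z X Y = c * D3Q n g x Z X Y := by
  simp only [D3Q, ← smul_eq_mul, iteratedFDeriv_const_smul_apply' hg.contDiffAt]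
  rfl

theorem lapQ_const_mul {g : Qn n → ℝ} (hg : ContDiff ℝ 2 g) (c : ℝ) (x : Qn n) :
    lapQ n (fun y => c * g y) x = c * lapQ n g x := by
  simp only [lapQ, D2Q_const_mul hg, Finset.mul_sum]

theorem PQ_const_mul {g : Qn n → ℝ} (hg : ContDiff ℝ 3 g) (c : ℝ) (x Z : Qn n) :
    PQ n (fun y => c * g y) x Z = c * PQ n g x Z := by
  simp only [PQ, D3Q_const_mul hg, Finset.mul_sum, mul_add]

theorem PQ_smul (g : Qn n → ℝ) (x : Qn n) (c : ℝ) (Z : Qn n) :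
    PQ n g x (c • Z) = c * PQ n g x Z := by
  simp only [PQ, D3Q_eq_fderiv, ← IopCLM_apply, map_smul, FunLike.coe_smul, Pi.smul_apply,
    smul_eq_mul, Finset.mul_sum, mul_add]

end Quaternionic

section LogQuaternionic

variable {n : ℕ} {F : Qn n → ℝ}

theorem lapQ_log (hF : ContDiff ℝ 2 F) (hF0 : ∀ y, F y ≠ 0) (x : Qn n) :
    lapQ n (fun y => log (F y)) x =
      (F x)⁻¹ * lapQ n F x - (F x ^ 2)⁻¹ * ‖gradient F x‖ ^ 2 := by
  simp only [lapQ, D2Q_eq_fderiv, fderiv_fderiv_log_apply hF hF0, ← inner_gradient_left,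
    Finset.sum_sub_distrib, ← Finset.mul_sum, sum_inner_eQ_mul_inner_eQ]

theorem sum_D3Q_log_gradient (hF : ContDiff ℝ 3 F) (hF0 : ∀ y, F y ≠ 0) (x : Qn n) :
    ∑ b, D3Q n (fun y => log (F y)) x (gradient F x) (eQ n b) (eQ n b) =
      (F x)⁻¹ * ∑ b, D3Q n F x (gradient F x) (eQ n b) (eQ n b)
        - (F x ^ 2)⁻¹ * (‖gradient F x‖ ^ 2 * lapQ n F x
          + 2 * D2Q n F x (gradient F x) (gradient F x))
        + 2 * (F x ^ 3)⁻¹ * ‖gradient F x‖ ^ 4 := by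
  set G := gradient F x
  have hterm : ∀ b, D3Q n (fun y => log (F y)) x G (eQ n b) (eQ n b) =
      (F x)⁻¹ * D3Q n F x G (eQ n b) (eQ n b)
        - (F x ^ 2)⁻¹ * ‖G‖ ^ 2 * D2Q n F x (eQ n b) (eQ n b)
        - 2 * (F x ^ 2)⁻¹ * (⟪G, eQ n b⟫ * fderiv ℝ (fderiv ℝ F) x G (eQ n b))
        + 2 * (F x ^ 3)⁻¹ * ‖G‖ ^ 2 * (⟪G, eQ n b⟫ * ⟪G, eQ n b⟫) := fun b => by
    simp only [D3Q_eq_fderiv, D2Q_eq_fderiv, fderiv_fderiv_fderiv_log_apply hF hF0, G,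
      ← inner_gradient_left, real_inner_self_eq_norm_sq]
    ring
  simp only [Finset.sum_congr rfl fun b _ => hterm b, Finset.sum_add_distrib,
    Finset.sum_sub_distrib, ← Finset.mul_sum, sum_inner_eQ_mul_apply, sum_inner_eQ_mul_inner_eQ,
    lapQ, D2Q_eq_fderiv]
  ring

theorem sum_D3Q_log_Iop_gradient (hF : ContDiff ℝ 3 F) (hF0 : ∀ y, F y ≠ 0) (x : Qn n)
    (s : Fin 3) :
    ∑ b, D3Q n (fun y => log (F y)) x (Iop n s (gradient F x)) (eQ n b) (Iop n s (eQ n b)) =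
      (F x)⁻¹ * ∑ b, D3Q n F x (Iop n s (gradient F x)) (eQ n b) (Iop n s (eQ n b)) := by
  set G := gradient F x
  set B := fderiv ℝ (fderiv ℝ F) x (Iop n s G)
  have hterm : ∀ b, D3Q n (fun y => log (F y)) x (Iop n s G) (eQ n b) (Iop n s (eQ n b)) =
      (F x)⁻¹ * D3Q n F x (Iop n s G) (eQ n b) (Iop n s (eQ n b))
        - (F x ^ 2)⁻¹ * (⟪G, eQ n b⟫ * (B.comp (IopCLM n s)) (eQ n b)
          - ⟪Iop n s G, eQ n b⟫ * B (eQ n b)) := fun b => by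
    simp only [D3Q_eq_fderiv, fderiv_fderiv_fderiv_log_apply hF hF0, G, B,
      ← inner_gradient_left, inner_Iop_self, inner_Iop_right s _ (eQ n b),
      ContinuousLinearMap.comp_apply, IopCLM_apply]
    ring
  simp only [Finset.sum_congr rfl fun b _ => hterm b, Finset.sum_sub_distrib, ← Finset.mul_sum,
    sum_inner_eQ_mul_apply]
  simp only [ContinuousLinearMap.comp_apply, IopCLM_apply, sub_self, mul_zero, sub_zero]

theorem PQ_log_gradient (hF : ContDiff ℝ 3 F) (hF0 : ∀ y, F y ≠ 0) (x : Qn n) :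
    PQ n (fun y => log (F y)) x (gradient F x) =
      (F x)⁻¹ * PQ n F x (gradient F x)
        - (F x ^ 2)⁻¹ * (‖gradient F x‖ ^ 2 * lapQ n F x
          + 2 * D2Q n F x (gradient F x) (gradient F x))
        + 2 * (F x ^ 3)⁻¹ * ‖gradient F x‖ ^ 4 := by
  simp only [PQ, sum_D3Q_log_gradient hF hF0, sum_D3Q_log_Iop_gradient hF hF0, ← Finset.mul_sum]
  ring

end LogQuaternionic

theorem qc_P_change_of_variable (n : ℕ) (F : Qn n → ℝ)
    (hF : ContDiff ℝ (⊤ : ℕ∞) F) (hFpos : ∀ x, 0 < F x)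
    (u f : Qn n → ℝ) (hu : u = fun x => (F x) ^ 2)
    (hf : f = fun x => -2 * Real.log (F x)) (x : Qn n) :
    u x * PQ n f x (gradient f x) =
      4 * PQ n F x (gradient F x)
      + (-(1 / 4) * ‖gradient f x‖ ^ 4 + (1 / 2) * ‖gradient f x‖ ^ 2 * lapQ n f x
          + D2Q n f x (gradient f x) (gradient f x)) * u x := by
  subst hu hf
  have hF3 : ContDiff ℝ 3 F := hF.of_le ENat.LEInfty.out
  have hF0 : ∀ y, F y ≠ 0 := fun y => (hFpos y).ne'
  have hL : ContDiff ℝ 3 (fun y => log (F y)) := hF3.log hF0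
  have hF1 : DifferentiableAt ℝ F x := hF3.differentiable (by norm_num) x
  have hgrad : gradient (fun y => -2 * log (F y)) x = (-2 * (F x)⁻¹) • gradient F x := by
    rw [gradient_fun_const_mul (hF1.log (hF0 x)), gradient_log_comp hF1 (hF0 x), smul_smul]
  rw [hgrad, PQ_smul, PQ_const_mul hL, PQ_log_gradient hF3 hF0,
    lapQ_const_mul (hL.of_le (by norm_num)), lapQ_log (hF3.of_le (by norm_num)) hF0,
    D2Q_const_mul (hL.of_le (by norm_num)), D2Q_eq_fderiv, D2Q_eq_fderiv,
    fderiv_fderiv_log_apply (hF3.of_le (by norm_num)) hF0]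
  simp only [map_smul, FunLike.coe_smul, Pi.smul_apply, smul_eq_mul, ← inner_gradient_left,
    real_inner_self_eq_norm_sq, norm_smul, norm_mul, norm_inv, Real.norm_eq_abs,
    abs_of_pos (hFpos x)]
  have hFx := hF0 x
  field_simp
  ring
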